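/- For θ ∈ (0, π) and x ∈ {0,1}, the state |x; α⊡_i β⟩ has the expansion |x; α⊡_i β⟩ = (1/√2) · (1/√(1+(−1)^i cos α cos β)) · Σ_{j∈{0,1}} (−1)^{xj} √(1+(−1)^j cos α) √(1+(−1)^{i+j} cos β) |j⟩, for all α, β ∈ (0, π) and i ∈ {0,1}. -/

import Mathlib

open Real

/-- The qubit state `|x; θ⟩ = cos(θ/2)|0⟩ + (-1)^x sin(θ/2)|1⟩`. -/
noncomputable def qubit (x : Fin 2) (θ : ℝ) : Fin 2 → ℝ :=
  ![Real.cos (θ / 2), (-1 : ℝ) ^ (x : ℕ) * Real.sin (θ / 2)]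

/-- The check-node angle
`α ⊡_i β := arccos ((cos α + (-1)^i cos β)/(1 + (-1)^i cos α cos β))`. -/
noncomputable def boxstar (α β : ℝ) (i : ℕ) : ℝ :=
  Real.arccos ((Real.cos α + (-1 : ℝ) ^ i * Real.cos β) /
    (1 + (-1 : ℝ) ^ i * (Real.cos α * Real.cos β)))

/-! Writing `a = cos α` and `c = ±cos β`, the angle `α ⊡_i β` is `arccos t` with
`t = (a + c) / (1 + a c)`, the relativistic velocity addition of `a` and `c`. The identity
`1 ± t = (1 ± a)(1 ± c) / (1 + a c)` turns the half-angle formulas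
`cos (arccos t / 2) = √((1 + t) / 2)`, `sin (arccos t / 2) = √((1 - t) / 2)` into the
product of square roots in the expansion. -/

lemma abs_cos_lt_one_of_mem_Ioo {γ : ℝ} (hγ : γ ∈ Set.Ioo 0 π) : |cos γ| < 1 := by
  rw [← sq_lt_one_iff_abs_lt_one, cos_sq']
  linarith [pow_pos (sin_pos_of_pos_of_lt_pi hγ.1 hγ.2) 2]

lemma one_add_mul_pos_of_abs_lt_one {a c : ℝ} (ha : |a| < 1) (hc : |c| < 1) :
    0 < 1 + a * c := by
  have hac : |a * c| < 1 := by
    rw [abs_mul]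
    exact mul_lt_one_of_nonneg_of_lt_one_left (abs_nonneg a) ha hc.le
  linarith [neg_abs_le (a * c)]

lemma one_add_neg_one_pow_mul_velocity_add (n : ℕ) {a c : ℝ} (h : 1 + a * c ≠ 0) :
    1 + (-1) ^ n * ((a + c) / (1 + a * c)) =
      (1 + (-1) ^ n * a) * (1 + (-1) ^ n * c) / (1 + a * c) := by
  have hsq : ((-1 : ℝ) ^ n) ^ 2 = 1 := by
    rw [← pow_mul, mul_comm, pow_mul, neg_one_sq, one_pow]
  field_simp
  linear_combination (-(a * c)) * hsq

lemma qubit_arccos_apply {t : ℝ} (ht₁ : -1 ≤ t) (ht₂ : t ≤ 1) (x j : Fin 2) :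
    qubit x (arccos t) j = (-1) ^ ((x : ℕ) * (j : ℕ)) * √((1 + (-1) ^ (j : ℕ) * t) / 2) := by
  fin_cases j
  · simp [qubit, cos_half (by linarith [arccos_nonneg t, pi_pos]) (arccos_le_pi t),
      cos_arccos ht₁ ht₂]
  · simp [qubit, sin_half_eq_sqrt (arccos_nonneg t) (by linarith [arccos_le_pi t, pi_pos]),
      cos_arccos ht₁ ht₂, sub_eq_add_neg]

theorem qubit_arccos_velocity_add_apply {a c : ℝ} (ha : |a| < 1) (hc : |c| < 1) (x j : Fin 2) :
    qubit x (arccos ((a + c) / (1 + a * c))) j =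
      (-1) ^ ((x : ℕ) * (j : ℕ)) * √(1 + (-1) ^ (j : ℕ) * a) * √(1 + (-1) ^ (j : ℕ) * c) /
        (√2 * √(1 + a * c)) := by
  have hD := one_add_mul_pos_of_abs_lt_one ha hc
  have hsign : ∀ (n : ℕ) (b : ℝ), |b| < 1 → 0 ≤ 1 + (-1) ^ n * b := fun n b hb => by
    rcases neg_one_pow_eq_or ℝ n with h | h <;> rw [h] <;>
      linarith [le_abs_self b, neg_abs_le b]
  have hsplit (n : ℕ) := one_add_neg_one_pow_mul_velocity_add n hD.ne'
  have ht (n : ℕ) : 0 ≤ 1 + (-1) ^ n * ((a + c) / (1 + a * c)) :=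
    hsplit n ▸ div_nonneg (mul_nonneg (hsign n a ha) (hsign n c hc)) hD.le
  rw [qubit_arccos_apply (by linarith [ht 0]) (by linarith [ht 1]), hsplit,
    div_div, sqrt_div' _ (by positivity), sqrt_mul (hsign _ a ha), sqrt_mul hD.le]
  ring

/-- Expansion of `|x; α ⊡_i β⟩` in the computational basis:
`|x; α⊡_i β⟩ = (1/√2)(1/√(1+(−1)^i cos α cos β)) Σ_j (−1)^{xj}
√(1+(−1)^j cos α) √(1+(−1)^{i+j} cos β) |j⟩`. -/
theorem boxstar_qubit_expansion (α β : ℝ)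
    (hα : α ∈ Set.Ioo 0 π) (hβ : β ∈ Set.Ioo 0 π) (x i : Fin 2) :
    qubit x (boxstar α β (i : ℕ)) = fun j : Fin 2 =>
      (1 / Real.sqrt 2) *
        (1 / Real.sqrt (1 + (-1 : ℝ) ^ (i : ℕ) * (Real.cos α * Real.cos β))) *
        ((-1 : ℝ) ^ ((x : ℕ) * (j : ℕ)) *
          Real.sqrt (1 + (-1 : ℝ) ^ (j : ℕ) * Real.cos α) *
          Real.sqrt (1 + (-1 : ℝ) ^ ((i : ℕ) + (j : ℕ)) * Real.cos β)) := by
  have hc : |(-1) ^ (i : ℕ) * cos β| < 1 := by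
    simpa using abs_cos_lt_one_of_mem_Ioo hβ
  funext j
  rw [boxstar, mul_left_comm,
    qubit_arccos_velocity_add_apply (abs_cos_lt_one_of_mem_Ioo hα) hc]
  rw [← mul_assoc ((-1) ^ (j : ℕ)), ← pow_add, add_comm (j : ℕ)]
  ring
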